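/- Weyl/Ky Fan stability: If A is a compact operator with lim_j j^{1/p} μ_j(A) = Λ existing, and B is compact with μ_j(B) = o(j^{-1/p}), then lim_j j^{1/p} μ_j(A+B) exists and equals Λ. -/

import Mathlib

/-!
Ky Fan's inequality with the split `j = m + k`, `k ≈ s j`, gives
`μ_j(A+B) ≤ μ_{(1-s)j}(A) + μ_{sj}(B)`, hence after multiplying by `j^{1/p}`
the upper bound `(1-s)^{-1/p} Λ + s^{-1/p} · o(1)`. Applied to `A = (A+B) + (-B)` at the
index `j + k` it gives the lower bound `(1+s)^{-1/p} Λ - s^{-1/p} · o(1)`. Letting `s → 0` squeezes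
`j^{1/p} μ_j(A+B)` to `Λ`.
-/

open Filter Topology

variable {H : Type*} [NormedAddCommGroup H] [InnerProductSpace ℂ H] [CompleteSpace H]

/-- The `j`-th singular value of a bounded operator (approximation number):
for compact operators this is the `(j+1)`-th eigenvalue of `|T|` in decreasing order. -/
noncomputable def mu (T : H →L[ℂ] H) (j : ℕ) : ℝ :=
  sInf {c : ℝ | ∃ F : H →L[ℂ] H, FiniteDimensional ℂ (LinearMap.range F.toLinearMap) ∧
    Module.finrank ℂ (LinearMap.range F.toLinearMap) ≤ j ∧ c = ‖T - F‖}

theorem LinearMap.finiteDimensional_range_add {K V W : Type*} [DivisionRing K]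
    [AddCommGroup V] [Module K V] [AddCommGroup W] [Module K W] (f g : V →ₗ[K] W)
    [FiniteDimensional K (LinearMap.range f)] [FiniteDimensional K (LinearMap.range g)] :
    FiniteDimensional K (LinearMap.range (f + g)) :=
  Submodule.finiteDimensional_of_le (LinearMap.range_add_le f g)

theorem LinearMap.finrank_range_add_le {K V W : Type*} [DivisionRing K]
    [AddCommGroup V] [Module K V] [AddCommGroup W] [Module K W] (f g : V →ₗ[K] W)
    [FiniteDimensional K (LinearMap.range f)] [FiniteDimensional K (LinearMap.range g)] :
    Module.finrank K (LinearMap.range (f + g)) ≤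
      Module.finrank K (LinearMap.range f) + Module.finrank K (LinearMap.range g) :=
  (Submodule.finrank_mono (LinearMap.range_add_le f g)).trans
    (Submodule.finrank_add_le_finrank_add_finrank _ _)

section SingularValues

variable {E : Type*} [NormedAddCommGroup E] [InnerProductSpace ℂ E]

lemma mu_le_norm_sub (T F : E →L[ℂ] E) {j : ℕ}
    (hF : FiniteDimensional ℂ (LinearMap.range F.toLinearMap))
    (hj : Module.finrank ℂ (LinearMap.range F.toLinearMap) ≤ j) :
    mu T j ≤ ‖T - F‖ :=
  csInf_le ⟨0, by rintro c ⟨F, -, -, rfl⟩; positivity⟩ ⟨F, hF, hj, rfl⟩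

lemma le_mu {T : E →L[ℂ] E} {j : ℕ} {c : ℝ}
    (h : ∀ F : E →L[ℂ] E, FiniteDimensional ℂ (LinearMap.range F.toLinearMap) →
      Module.finrank ℂ (LinearMap.range F.toLinearMap) ≤ j → c ≤ ‖T - F‖) :
    c ≤ mu T j := by
  have h0 : LinearMap.range (0 : E →L[ℂ] E).toLinearMap = ⊥ := by simp
  refine le_csInf ⟨‖T - 0‖, 0, ?_, ?_, rfl⟩ ?_
  · rw [h0]; infer_instance
  · rw [h0, finrank_bot]; exact j.zero_le
  · rintro _ ⟨F, hF, hj, rfl⟩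
    exact h F hF hj

lemma mu_neg_le (T : E →L[ℂ] E) (j : ℕ) : mu (-T) j ≤ mu T j :=
  le_mu fun F hF hj => by
    have hrange : LinearMap.range (-F).toLinearMap = LinearMap.range F.toLinearMap := by simp
    calc mu (-T) j ≤ ‖-T - -F‖ := mu_le_norm_sub _ _ (hrange ▸ hF) (hrange ▸ hj)
      _ = ‖T - F‖ := by rw [← norm_neg, neg_sub_neg, neg_sub]

@[simp]
lemma mu_neg (T : E →L[ℂ] E) (j : ℕ) : mu (-T) j = mu T j :=
  le_antisymm (mu_neg_le T j) (by simpa using mu_neg_le (-T) j)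

theorem mu_add_le (A B : E →L[ℂ] E) (j k : ℕ) :
    mu (A + B) (j + k) ≤ mu A j + mu B k := by
  have key : ∀ F G : E →L[ℂ] E,
      FiniteDimensional ℂ (LinearMap.range F.toLinearMap) →
      Module.finrank ℂ (LinearMap.range F.toLinearMap) ≤ j →
      FiniteDimensional ℂ (LinearMap.range G.toLinearMap) →
      Module.finrank ℂ (LinearMap.range G.toLinearMap) ≤ k →
      mu (A + B) (j + k) ≤ ‖A - F‖ + ‖B - G‖ := by
    intro F G _ hF _ hG
    have hFG := LinearMap.finiteDimensional_range_add F.toLinearMap G.toLinearMap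
    have hjk := (LinearMap.finrank_range_add_le F.toLinearMap G.toLinearMap).trans
      (add_le_add hF hG)
    calc mu (A + B) (j + k) ≤ ‖A + B - (F + G)‖ := mu_le_norm_sub _ _ hFG hjk
      _ = ‖(A - F) + (B - G)‖ := by rw [add_sub_add_comm]
      _ ≤ ‖A - F‖ + ‖B - G‖ := norm_add_le _ _
  suffices mu (A + B) (j + k) - mu B k ≤ mu A j by linarith
  refine le_mu fun F hF hj => ?_
  suffices mu (A + B) (j + k) - ‖A - F‖ ≤ mu B k by linarith
  exact le_mu fun G hG hk => by linarith [key F G hF hj hG hk]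

end SingularValues

section RegularVariation

variable {q L : ℝ} {a b c : ℕ → ℝ}

lemma tendsto_rpow_mul_comp_of_tendsto_div
    (ha : Tendsto (fun j : ℕ => (j : ℝ) ^ q * a j) atTop (𝓝 L))
    {n : ℕ → ℕ} {t : ℝ} (ht : 0 < t) (hn : Tendsto (fun j : ℕ => (n j : ℝ) / j) atTop (𝓝 t)) :
    Tendsto (fun j : ℕ => (j : ℝ) ^ q * a (n j)) atTop (𝓝 (t ^ (-q) * L)) := by
  have hn_atTop : Tendsto n atTop atTop := by
    rw [← tendsto_natCast_atTop_iff (R := ℝ)]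
    refine (hn.pos_mul_atTop ht tendsto_natCast_atTop_atTop).congr' ?_
    filter_upwards [eventually_ge_atTop 1] with j hj
    field_simp
  have hratio : Tendsto (fun j : ℕ => ((j : ℝ) / n j) ^ q) atTop (𝓝 (t ^ (-q))) := by
    rw [Real.rpow_neg ht.le, ← Real.inv_rpow ht.le]
    refine ((hn.inv₀ ht.ne').rpow_const (Or.inl (inv_ne_zero ht.ne'))).congr' ?_
    filter_upwards with j
    rw [inv_div]
  refine (hratio.mul (ha.comp hn_atTop)).congr' ?_
  filter_upwards [eventually_ge_atTop 1, hn_atTop.eventually_ge_atTop 1] with j hj hnj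
  have hnj : (0 : ℝ) < n j := by exact_mod_cast hnj
  rw [Function.comp_apply, Real.div_rpow (by positivity) hnj.le, ← mul_assoc,
    div_mul_cancel₀ _ (Real.rpow_pos_of_pos hnj q).ne']

lemma tendsto_natFloor_mul_div_natCast {s : ℝ} (hs : 0 ≤ s) :
    Tendsto (fun j : ℕ => (⌊s * j⌋₊ : ℝ) / j) atTop (𝓝 s) :=
  (tendsto_nat_floor_mul_div_atTop hs).comp tendsto_natCast_atTop_atTop

lemma eventually_rpow_mul_lt_of_le_add (hc : ∀ j k, c (j + k) ≤ a j + b k)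
    (ha : Tendsto (fun j : ℕ => (j : ℝ) ^ q * a j) atTop (𝓝 L))
    (hb : Tendsto (fun j : ℕ => (j : ℝ) ^ q * b j) atTop (𝓝 0))
    {s u : ℝ} (hs0 : 0 < s) (hs1 : s < 1) (hu : (1 - s) ^ (-q) * L < u) :
    ∀ᶠ j : ℕ in atTop, (j : ℝ) ^ q * c j < u := by
  set k : ℕ → ℕ := fun j => ⌊s * j⌋₊
  have hk_le : ∀ j, k j ≤ j := fun j =>
    Nat.floor_le_of_le (by nlinarith [(j.cast_nonneg : (0 : ℝ) ≤ j)])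
  have hk : Tendsto (fun j : ℕ => (k j : ℝ) / j) atTop (𝓝 s) :=
    tendsto_natFloor_mul_div_natCast hs0.le
  have hm : Tendsto (fun j : ℕ => ((j - k j : ℕ) : ℝ) / j) atTop (𝓝 (1 - s)) := by
    refine (tendsto_const_nhds.sub hk).congr' ?_
    filter_upwards [eventually_ge_atTop 1] with j hj
    rw [Nat.cast_sub (hk_le j)]
    field_simp
  have hbound := (tendsto_rpow_mul_comp_of_tendsto_div ha (by linarith) hm).add
    (tendsto_rpow_mul_comp_of_tendsto_div hb hs0 hk)
  rw [mul_zero, add_zero] at hbound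
  filter_upwards [hbound.eventually_lt_const hu] with j hj
  calc (j : ℝ) ^ q * c j = (j : ℝ) ^ q * c (j - k j + k j) := by rw [Nat.sub_add_cancel (hk_le j)]
    _ ≤ (j : ℝ) ^ q * (a (j - k j) + b (k j)) := by gcongr; exact hc _ _
    _ < u := by rwa [mul_add]

lemma eventually_lt_rpow_mul_of_le_add (hc : ∀ j k, a (j + k) ≤ c j + b k)
    (ha : Tendsto (fun j : ℕ => (j : ℝ) ^ q * a j) atTop (𝓝 L))
    (hb : Tendsto (fun j : ℕ => (j : ℝ) ^ q * b j) atTop (𝓝 0))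
    {s u : ℝ} (hs0 : 0 < s) (hu : u < (1 + s) ^ (-q) * L) :
    ∀ᶠ j : ℕ in atTop, u < (j : ℝ) ^ q * c j := by
  set k : ℕ → ℕ := fun j => ⌊s * j⌋₊
  have hk : Tendsto (fun j : ℕ => (k j : ℝ) / j) atTop (𝓝 s) :=
    tendsto_natFloor_mul_div_natCast hs0.le
  have hn : Tendsto (fun j : ℕ => ((j + k j : ℕ) : ℝ) / j) atTop (𝓝 (1 + s)) := by
    refine (tendsto_const_nhds.add hk).congr' ?_
    filter_upwards [eventually_ge_atTop 1] with j hj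
    push_cast
    field_simp
  have hbound := (tendsto_rpow_mul_comp_of_tendsto_div ha (by linarith) hn).sub
    (tendsto_rpow_mul_comp_of_tendsto_div hb hs0 hk)
  rw [mul_zero, sub_zero] at hbound
  filter_upwards [hbound.eventually_const_lt hu] with j hj
  calc u < (j : ℝ) ^ q * a (j + k j) - (j : ℝ) ^ q * b (k j) := hj
    _ ≤ (j : ℝ) ^ q * (c j + b (k j)) - (j : ℝ) ^ q * b (k j) := by gcongr; exact hc _ _
    _ = (j : ℝ) ^ q * c j := by ring

theorem tendsto_rpow_mul_of_le_add (hc : ∀ j k, c (j + k) ≤ a j + b k)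
    (hc' : ∀ j k, a (j + k) ≤ c j + b k)
    (ha : Tendsto (fun j : ℕ => (j : ℝ) ^ q * a j) atTop (𝓝 L))
    (hb : Tendsto (fun j : ℕ => (j : ℝ) ^ q * b j) atTop (𝓝 0)) :
    Tendsto (fun j : ℕ => (j : ℝ) ^ q * c j) atTop (𝓝 L) := by
  have hcont : ∀ σ : ℝ, ContinuousAt (fun s : ℝ => (1 + σ * s) ^ (-q) * L) 0 := fun σ =>
    ((continuousAt_const.add (continuousAt_const.mul continuousAt_id)).rpow_const
      (Or.inl (by simp))).mul continuousAt_const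
  have hnear : ∀ σ : ℝ, Tendsto (fun s : ℝ => (1 + σ * s) ^ (-q) * L) (𝓝[>] 0) (𝓝 L) :=
    fun σ => by simpa using (hcont σ).tendsto.mono_left nhdsWithin_le_nhds
  refine tendsto_order.2 ⟨fun u hu => ?_, fun u hu => ?_⟩
  · obtain ⟨s, hs, hs0⟩ := ((hnear 1).eventually_const_lt hu |>.and self_mem_nhdsWithin).exists
    exact eventually_lt_rpow_mul_of_le_add hc' ha hb hs0 (by simpa using hs)
  · obtain ⟨s, hs, hs0, hs1⟩ :=
      ((hnear (-1)).eventually_lt_const hu |>.and (Ioo_mem_nhdsGT one_pos)).exists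
    exact eventually_rpow_mul_lt_of_le_add hc ha hb hs0 hs1 (by simpa [sub_eq_add_neg] using hs)

end RegularVariation

theorem mu_add_littleO_stability_general (p : ℝ)
    (A B : H →L[ℂ] H) (Λ : ℝ)
    (hA : Tendsto (fun j : ℕ => ((j : ℝ)) ^ (1 / p) * mu A j) atTop (𝓝 Λ))
    (hB : (fun j : ℕ => mu B j) =o[atTop] fun j : ℕ => ((j : ℝ)) ^ (-(1 / p))) :
    Tendsto (fun j : ℕ => ((j : ℝ)) ^ (1 / p) * mu (A + B) j) atTop (𝓝 Λ) := by
  have hB' : Tendsto (fun j : ℕ => ((j : ℝ)) ^ (1 / p) * mu B j) atTop (𝓝 0) := by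
    refine hB.tendsto_div_nhds_zero.congr fun j => ?_
    rw [Real.rpow_neg j.cast_nonneg, div_inv_eq_mul, mul_comm]
  refine tendsto_rpow_mul_of_le_add (mu_add_le A B) (fun j k => ?_) hA hB'
  simpa using mu_add_le (A + B) (-B) j k

/-- Weyl/Ky Fan stability: if `lim_j j^{1/p} μ_j(A) = Λ` and `μ_j(B) = o(j^{-1/p})`, then
`lim_j j^{1/p} μ_j(A+B) = Λ`. -/
theorem mu_add_littleO_stability [SecondCountableTopology H] (p : ℝ) (hp : 0 < p)
    (A B : H →L[ℂ] H) (hAc : IsCompactOperator ⇑A) (hBc : IsCompactOperator ⇑B) (Λ : ℝ)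
    (hA : Tendsto (fun j : ℕ => ((j : ℝ)) ^ (1 / p) * mu A j) atTop (𝓝 Λ))
    (hB : (fun j : ℕ => mu B j) =o[atTop] fun j : ℕ => ((j : ℝ)) ^ (-(1 / p))) :
    Tendsto (fun j : ℕ => ((j : ℝ)) ^ (1 / p) * mu (A + B) j) atTop (𝓝 Λ) :=
  mu_add_littleO_stability_general p A B Λ hA hB
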